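/- arXiv:1602.00176 — 3 statements merged into one kernel-verified Lean document; each statement's English description precedes it below -/
import Mathlib

section
/- Let F(n) be the n-th Fibonacci number. Then lim_{n→∞} F(5^n) = 0 in ℤ_5; in fact ν_5(F(5^n)) = n for all n ≥ 0, where ν_5 is the 5-adic valuation. -/
open Filter Topology

instance : Fact (Nat.Prime 5) := ⟨by norm_num⟩

/-!
Combining `F(2m)`, `F(2m+1)`, `F(m+k)` with Cassini's identity gives the quintupling formula
`F(5n) = 5 F(n) (5 F(n)^4 ± 5 F(n)^2 + 1)`. The last factor is `≡ 1 (mod 5)`, so multiplying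
the index by `5` raises `ν₅` by exactly one, and `ν₅(F(5^n)) = n` follows by induction from
`F(1) = 1`. In particular `5^n ∣ F(5^n)`, i.e. `‖F(5^n)‖₅ ≤ 5^{-n} → 0`.
-/

namespace Int

theorem fib_five_mul (n : ℤ) :
    fib (5 * n) = 5 * fib n * (5 * fib n ^ 4 + 5 * (-1) ^ n.natAbs * fib n ^ 2 + 1) := by
  have hpred : fib (n - 1) = fib (n + 1) - fib n := by
    have := fib_add_two (n - 1)
    rw [sub_add_cancel, show n - 1 + 2 = n + 1 by ring] at this
    linarith
  have hsign : ((-1 : ℤ) ^ n.natAbs) ^ 2 = 1 := by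
    rw [← pow_mul, pow_mul', neg_one_sq, one_pow]
  have cassini := fib_succ_mul_fib_pred_sub_fib_sq n
  rw [hpred] at cassini
  rw [show 5 * n = n + 2 * (2 * n) by ring, fib_add, hpred]
  simp only [fib_two_mul, fib_two_mul_add_one]
  set a := fib n
  set b := fib (n + 1)
  set s := (-1 : ℤ) ^ n.natAbs
  linear_combination (25 * a ^ 3 + 5 * a * (b ^ 2 - a * b - a ^ 2 + s)) * cassini + 5 * a * hsign

end Int

theorem padicValInt_prime_mul_mul_of_not_dvd {p : ℕ} [hp : Fact p.Prime] {x u : ℤ}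
    (hx : x ≠ 0) (hu : ¬ (p : ℤ) ∣ u) : padicValInt p (p * x * u) = padicValInt p x + 1 := by
  have hu0 : u ≠ 0 := by rintro rfl; exact hu (dvd_zero _)
  have hp0 : (p : ℤ) ≠ 0 := by exact_mod_cast hp.out.ne_zero
  rw [padicValInt.mul (mul_ne_zero hp0 hx) hu0, padicValInt.mul hp0 hx,
    padicValInt.eq_zero_of_not_dvd hu, padicValInt.self hp.out.one_lt]
  ring

theorem padicValNat_five_fib_five_mul {n : ℕ} (hn : n ≠ 0) :
    padicValNat 5 (Nat.fib (5 * n)) = padicValNat 5 (Nat.fib n) + 1 := by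
  have hfib : Int.fib n ≠ 0 := by simpa using hn
  have hcofactor (s x : ℤ) : ¬ ((5 : ℕ) : ℤ) ∣ 5 * x ^ 4 + 5 * s * x ^ 2 + 1 := by
    rw [Nat.cast_ofNat, Int.dvd_add_right ⟨x ^ 4 + s * x ^ 2, by ring⟩]
    norm_num
  calc padicValNat 5 (Nat.fib (5 * n))
      = padicValInt 5 (Int.fib (5 * n : ℕ)) := by rw [Int.fib_natCast, padicValInt.of_nat]
    _ = padicValInt 5 ((5 : ℕ) * Int.fib n *
          (5 * Int.fib n ^ 4 + 5 * (-1) ^ (n : ℤ).natAbs * Int.fib n ^ 2 + 1)) := by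
        rw [Nat.cast_mul, Nat.cast_ofNat, Int.fib_five_mul]
    _ = padicValInt 5 (Int.fib n) + 1 :=
        padicValInt_prime_mul_mul_of_not_dvd hfib (hcofactor _ _)
    _ = padicValNat 5 (Nat.fib n) + 1 := by rw [Int.fib_natCast, padicValInt.of_nat]

theorem PadicInt.tendsto_natCast_zero_of_pow_dvd {p : ℕ} [Fact p.Prime] {a : ℕ → ℕ}
    (h : ∀ n, p ^ n ∣ a n) : Tendsto (fun n => (a n : ℤ_[p])) atTop (𝓝 0) := by
  rw [tendsto_zero_iff_norm_tendsto_zero]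
  have hp : ‖(p : ℤ_[p])‖ < 1 := norm_natCast_lt_one_iff.2 dvd_rfl
  refine squeeze_zero (fun _ => norm_nonneg _) (fun n => ?_)
    (tendsto_pow_atTop_nhds_zero_of_lt_one (norm_nonneg _) hp)
  obtain ⟨c, hc⟩ := h n
  rw [hc, Nat.cast_mul, Nat.cast_pow, norm_mul, norm_pow]
  exact mul_le_of_le_one_right (by positivity) (norm_le_one _)

/-- `lim_{n→∞} F(5^n) = 0` in `ℤ_5`; in fact `ν_5(F(5^n)) = n` for all `n ≥ 0`. -/
theorem stmt_10 :
    Tendsto (fun n : ℕ => ((Nat.fib (5 ^ n) : ℕ) : ℤ_[5])) atTop (𝓝 0) ∧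
      ∀ n : ℕ, padicValNat 5 (Nat.fib (5 ^ n)) = n := by
  have hval (n : ℕ) : padicValNat 5 (Nat.fib (5 ^ n)) = n := by
    induction n with
    | zero => simp
    | succ n ih => rw [pow_succ', padicValNat_five_fib_five_mul (by positivity), ih]
  exact ⟨PadicInt.tendsto_natCast_zero_of_pow_dvd fun n => by
    simpa only [hval n] using pow_padicValNat_dvd (p := 5) (n := Nat.fib (5 ^ n)), hval⟩
end

section
/- Let p be a prime and q as follows: q = 1 if e < p−1 and q = p^{⌈log_p(e+1)⌉} if e ≥ p−1, where e is the ramification index of a finite extension K/ℚ_p. Let g ∈ ℤ_p[x] be monic with a root β ∈ K satisfying |β|_p = 1, and let ω(β) be the (p^f − 1)-st root of unity in O_K congruent to β modulo a uniformizer (f = [K:ℚ_p]/e). Then |(β/ω(β))^q − 1|_p < p^{−1/(p−1)}. -/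
/-!
Write `u = β/ω`; since `‖β‖ = 1` and `β ≡ ω mod π`, `‖u - 1‖ ≤ p^(-1/e)`. In an ultrametric field
the binomial theorem gives `‖x^p - 1‖ ≤ max (‖x - 1‖^p) (p⁻¹ ‖x - 1‖)`, so raising to the `p`-th
power multiplies the exponent `c` in `‖x - 1‖ ≤ p^(-c)` by `p` as long as `c ≤ 1/(p-1)`, and once
`‖x - 1‖ < p^(-1/(p-1))` all further powers stay there. In both cases `q = p^k` with
`p^k / e > 1/(p-1)`, so `‖u^q - 1‖ < p^(-1/(p-1))`.
-/

section Ultrametric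

variable {K : Type*} [NormedField K] [IsUltrametricDist K]

theorem norm_pow_sub_one_le_norm_sub_one {x : K} (hx : ‖x‖ ≤ 1) (n : ℕ) :
    ‖x ^ n - 1‖ ≤ ‖x - 1‖ := by
  rw [← geom_sum_mul, norm_mul]
  refine mul_le_of_le_one_left (norm_nonneg _) ?_
  refine IsUltrametricDist.norm_sum_le_of_forall_le_of_nonneg zero_le_one fun i _ => ?_
  rw [norm_pow]
  exact pow_le_one₀ (norm_nonneg x) hx

theorem norm_pow_prime_sub_one_le {p : ℕ} (hp : p.Prime) {x : K} (hx : ‖x - 1‖ ≤ 1) :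
    ‖x ^ p - 1‖ ≤ max (‖x - 1‖ ^ p) (‖(p : K)‖ * ‖x - 1‖) := by
  have hexpand : x ^ p - 1 = ∑ i ∈ Finset.range p, (x - 1) ^ (i + 1) * (p.choose (i + 1) : K) := by
    conv_lhs => rw [← sub_add_cancel x 1, add_pow, Finset.sum_range_succ']
    simp
  rw [hexpand]
  refine IsUltrametricDist.norm_sum_le_of_forall_le_of_nonneg (by positivity) fun i hi => ?_
  rw [norm_mul, norm_pow]
  rcases Nat.lt_or_eq_of_le (Finset.mem_range.mp hi) with hip | hip
  · obtain ⟨m, hm⟩ := hp.dvd_choose_self i.succ_ne_zero hip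
    have hchoose : ‖(p.choose (i + 1) : K)‖ ≤ ‖(p : K)‖ := by
      rw [hm, Nat.cast_mul, norm_mul]
      exact mul_le_of_le_one_right (norm_nonneg _) (IsUltrametricDist.norm_natCast_le_one K m)
    calc ‖x - 1‖ ^ (i + 1) * ‖(p.choose (i + 1) : K)‖ ≤ ‖x - 1‖ * ‖(p : K)‖ :=
          mul_le_mul (pow_le_of_le_one (norm_nonneg _) hx i.succ_ne_zero) hchoose
            (norm_nonneg _) (norm_nonneg _)
      _ ≤ _ := by rw [mul_comm]; exact le_max_right _ _
  · rw [show i + 1 = p from hip, Nat.choose_self, Nat.cast_one, norm_one, mul_one]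
    exact le_max_left _ _

theorem norm_pow_sub_one_lt_of_norm_sub_one_lt {x : K} {r : ℝ} (hr : r ≤ 1) (hx : ‖x - 1‖ < r)
    (n : ℕ) : ‖x ^ n - 1‖ < r := by
  have hx1 : ‖x‖ ≤ 1 := by
    simpa using (IsUltrametricDist.norm_add_le_max (x - 1) 1).trans
      (max_le (hx.le.trans hr) norm_one.le)
  exact (norm_pow_sub_one_le_norm_sub_one hx1 n).trans_lt hx

variable {p : ℕ}

theorem norm_pow_prime_sub_one_le_rpow (hp : p.Prime) (hpK : ‖(p : K)‖ ≤ (p : ℝ)⁻¹) {x : K}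
    {c : ℝ} (hc0 : 0 ≤ c) (hc : c ≤ 1 / ((p : ℝ) - 1)) (hx : ‖x - 1‖ ≤ (p : ℝ) ^ (-c)) :
    ‖x ^ p - 1‖ ≤ (p : ℝ) ^ (-((p : ℝ) * c)) := by
  have hp1 : (1 : ℝ) < p := by exact_mod_cast hp.one_lt
  have hp0 : (0 : ℝ) ≤ p := by positivity
  have hx1 : ‖x - 1‖ ≤ 1 := hx.trans (Real.rpow_le_one_of_one_le_of_nonpos hp1.le (by linarith))
  refine (norm_pow_prime_sub_one_le hp hx1).trans (max_le ?_ ?_)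
  · calc ‖x - 1‖ ^ p ≤ ((p : ℝ) ^ (-c)) ^ p := pow_le_pow_left₀ (norm_nonneg _) hx p
      _ = (p : ℝ) ^ (-((p : ℝ) * c)) := by
        rw [← Real.rpow_natCast, ← Real.rpow_mul hp0, neg_mul, mul_comm]
  · have hpc : (p : ℝ) * c ≤ 1 + c := by
      rw [le_div_iff₀ (by linarith)] at hc
      linarith
    calc ‖(p : K)‖ * ‖x - 1‖ ≤ (p : ℝ)⁻¹ * (p : ℝ) ^ (-c) :=
          mul_le_mul hpK hx (norm_nonneg _) (by positivity)
      _ = (p : ℝ) ^ (-(1 + c)) := by rw [neg_add, Real.rpow_add (by positivity), Real.rpow_neg_one]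
      _ ≤ (p : ℝ) ^ (-((p : ℝ) * c)) := Real.rpow_le_rpow_of_exponent_le hp1.le (by linarith)

theorem norm_pow_prime_pow_sub_one_lt (hp : p.Prime) (hpK : ‖(p : K)‖ ≤ (p : ℝ)⁻¹) {x : K}
    {c : ℝ} (hc0 : 0 ≤ c) (hx : ‖x - 1‖ ≤ (p : ℝ) ^ (-c)) {k : ℕ}
    (hk : 1 / ((p : ℝ) - 1) < p ^ k * c) :
    ‖x ^ p ^ k - 1‖ < (p : ℝ) ^ (-1 / ((p : ℝ) - 1)) := by
  have hp1 : (1 : ℝ) < p := by exact_mod_cast hp.one_lt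
  have of_lt : ∀ {x : K} {c : ℝ}, ‖x - 1‖ ≤ (p : ℝ) ^ (-c) → 1 / ((p : ℝ) - 1) < c →
      ∀ n : ℕ, ‖x ^ n - 1‖ < (p : ℝ) ^ (-1 / ((p : ℝ) - 1)) := fun hx hc =>
    norm_pow_sub_one_lt_of_norm_sub_one_lt (Real.rpow_le_one_of_one_le_of_nonpos hp1.le
      (div_nonpos_of_nonpos_of_nonneg (by norm_num) (by linarith)))
      (hx.trans_lt (by rwa [Real.rpow_lt_rpow_left_iff hp1, neg_div, neg_lt_neg_iff]))
  induction k generalizing x c with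
  | zero => exact of_lt hx (by simpa using hk) _
  | succ k ih =>
    by_cases hcp : 1 / ((p : ℝ) - 1) < c
    · exact of_lt hx hcp _
    · rw [pow_succ', pow_mul]
      refine ih (by positivity) (norm_pow_prime_sub_one_le_rpow hp hpK hc0 (not_lt.mp hcp) hx) ?_
      rwa [← mul_assoc, ← pow_succ]

end Ultrametric

theorem exists_pow_eq_and_one_div_sub_one_lt {p e : ℕ} (hp : 2 ≤ p) (he : 1 ≤ e) :
    ∃ k : ℕ, (if e < p - 1 then 1 else p ^ ⌈Real.logb p (e + 1)⌉₊) = p ^ k ∧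
      1 / ((p : ℝ) - 1) < p ^ k * (1 / e) := by
  have he0 : (0 : ℝ) < e := by exact_mod_cast he
  have hp1 : (1 : ℝ) ≤ p - 1 := by
    rw [le_sub_iff_add_le]
    exact_mod_cast hp
  split_ifs with hep
  · refine ⟨0, rfl, ?_⟩
    have hep' : (e : ℝ) + 1 < p := by exact_mod_cast (by omega : e + 1 < p)
    rw [pow_zero, one_mul]
    exact one_div_lt_one_div_of_lt he0 (by linarith)
  · refine ⟨_, rfl, ?_⟩
    have hle : e + 1 ≤ p ^ ⌈Real.logb p (e + 1)⌉₊ := by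
      rw [show (e : ℝ) + 1 = ((e + 1 : ℕ) : ℝ) by push_cast; rfl, Real.natCeil_logb_natCast]
      exact Nat.le_pow_clog (by omega) _
    have hle' : (e : ℝ) + 1 ≤ (p : ℝ) ^ ⌈Real.logb p (e + 1)⌉₊ := by exact_mod_cast hle
    calc 1 / ((p : ℝ) - 1) ≤ 1 := div_le_one_of_le₀ hp1 (by linarith)
      _ < (p : ℝ) ^ ⌈Real.logb p (e + 1)⌉₊ * (1 / e) := by
        rw [mul_one_div, one_lt_div he0]
        linarith

theorem stmt_17_general (p : ℕ) [Fact p.Prime]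
    (K : Type*) [NontriviallyNormedField K] [NormedAlgebra ℚ_[p] K]
    (hiso : ∀ x : ℚ_[p], ‖algebraMap ℚ_[p] K x‖ = ‖x‖)
    (e : ℕ) (he : 1 ≤ e)
    (π : K) (hπ : ‖π‖ = (p : ℝ) ^ (-(1 : ℝ) / e))
    (β : K)
    (hβ : ‖β‖ = 1)
    (ω : K) (hωβ : ‖β - ω‖ ≤ ‖π‖)
    (q : ℕ)
    (hq : q = if e < p - 1 then 1 else p ^ (⌈Real.logb p (e + 1)⌉₊)) :
    ‖(β / ω) ^ q - 1‖ < (p : ℝ) ^ (-(1 : ℝ) / (p - 1)) := by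
  have hp : p.Prime := Fact.out
  have hnorm_natCast (n : ℕ) : ‖(n : K)‖ = ‖(n : ℚ_[p])‖ := by
    rw [← map_natCast (algebraMap ℚ_[p] K), hiso]
  have : IsUltrametricDist K :=
    IsUltrametricDist.isUltrametricDist_of_forall_norm_natCast_le_one fun n =>
      (hnorm_natCast n).trans_le (IsUltrametricDist.norm_natCast_le_one ℚ_[p] n)
  have hpK : ‖(p : K)‖ = (p : ℝ)⁻¹ := (hnorm_natCast p).trans Padic.norm_p
  have hπ1 : ‖π‖ < 1 := hπ ▸ Real.rpow_lt_one_of_one_lt_of_neg (by exact_mod_cast hp.one_lt)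
    (div_neg_of_neg_of_pos (by norm_num) (by exact_mod_cast he))
  have hω : ‖ω‖ = 1 := by
    have hlt : ‖-(β - ω)‖ < ‖β‖ := by rw [norm_neg, hβ]; exact hωβ.trans_lt hπ1
    rw [← hβ, ← sub_sub_cancel β ω, sub_eq_add_neg,
      IsUltrametricDist.norm_add_eq_max_of_norm_ne_norm hlt.ne', max_eq_left hlt.le]
  have hu : ‖β / ω - 1‖ ≤ (p : ℝ) ^ (-(1 / e : ℝ)) := by
    rw [div_sub_one (norm_ne_zero_iff.mp (hω.trans_ne one_ne_zero)), norm_div, hω, div_one,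
      ← neg_div, ← hπ]
    exact hωβ
  obtain ⟨k, hqk, hk⟩ := exists_pow_eq_and_one_div_sub_one_lt hp.two_le he
  rw [hq, hqk]
  exact norm_pow_prime_pow_sub_one_lt hp hpK.le (by positivity) hu hk

/-- Lemma on `q`: for `K/ℚ_p` finite with ramification index `e` and residue degree `f`,
`β ∈ K` a root of a monic `g ∈ ℤ_p[x]` with `‖β‖ = 1`, and `ω(β)` the `(p^f − 1)`-st root
of unity congruent to `β` modulo a uniformizer `π`, setting `q = 1` if `e < p − 1` and
`q = p^⌈log_p(e+1)⌉` otherwise, we have `‖(β/ω(β))^q − 1‖ < p^(−1/(p−1))`. -/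
theorem stmt_17 (p : ℕ) [Fact p.Prime]
    (K : Type*) [NontriviallyNormedField K] [NormedAlgebra ℚ_[p] K]
    [FiniteDimensional ℚ_[p] K]
    (hiso : ∀ x : ℚ_[p], ‖algebraMap ℚ_[p] K x‖ = ‖x‖)
    (e f : ℕ) (he : 1 ≤ e) (hef : e * f = Module.finrank ℚ_[p] K)
    (π : K) (hπ : ‖π‖ = (p : ℝ) ^ (-(1 : ℝ) / e))
    (hram : ∀ x : K, x ≠ 0 → ∃ n : ℤ, ‖x‖ = (p : ℝ) ^ ((n : ℝ) / e))
    (g : Polynomial ℤ_[p]) (hg : g.Monic) (β : K)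
    (hβroot : Polynomial.aeval β (g.map (algebraMap ℤ_[p] ℚ_[p])) = 0)
    (hβ : ‖β‖ = 1)
    (ω : K) (hω : ω ^ (p ^ f - 1) = 1) (hωβ : ‖β - ω‖ ≤ ‖π‖)
    (q : ℕ)
    (hq : q = if e < p - 1 then 1 else p ^ (⌈Real.logb p (e + 1)⌉₊)) :
    ‖(β / ω) ^ q - 1‖ < (p : ℝ) ^ (-(1 : ℝ) / (p - 1)) :=
  stmt_17_general p K hiso e he π hπ β hβ ω hωβ q hq
end

section
/- The limiting density of residues attained by the Fibonacci sequence modulo powers of 11 is 145/264; that is, lim_{α→∞} |{F(n) mod 11^α : n ≥ 0}| / 11^α = 145/264. -/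
/-!
Work in `R = ZMod (11 ^ (n + 1))`. There `x ^ 2 = x + 1` has a root `φ ≡ 8 (mod 11)` (Hensel),
and since `φ ^ 10 ≢ 1 (mod 121)` this `φ` generates `Rˣ`. With `√5 = 2φ - 1`, Binet's formula
shows that `m = F k` iff `φ ^ k` is a root of `x ^ 2 - √5 m x - (-1) ^ k`. As every unit is a power
of `φ`, and `k` is even exactly when `φ ^ k` is a square, `m` is a Fibonacci residue iff
`5 m ^ 2 + 4` is a square, or `5 m ^ 2 - 4` is a square and `m mod 11 ∈ {1, 2, 5}`. Squares of
units are detected modulo `11`, which settles every class of `m` except `m ≡ 5`, where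
`5 m ^ 2 - 4 ≡ 0`. That class is in bijection with the non-unit squares of `R`, whose number
`Z n` satisfies `Z (n + 2) = Z n + 5 * 11 ^ n`. Altogether the number `N` of residues satisfies
`24 N = 145 * 11 ^ n + 24 - 11 ^ (n % 2)`, so `N / 11 ^ (n + 1) → 145 / 264`.
-/

open Polynomial Finset

theorem AddMonoidHom.card_filter_comp {G H F : Type*} [AddGroup G] [Fintype G] [AddGroup H]
    [Fintype H] [DecidableEq H] [FunLike F G H] [AddMonoidHomClass F G H] (f : F)
    (P : H → Prop) [DecidablePred P] (hP : ∀ h, P h → h ∈ Set.range f) :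
    #{g | P (f g)} = #{h | P h} * #{g | f g = 0} := by
  rw [card_eq_sum_card_fiberwise (f := f) (t := {h | P h}) fun g hg => by simpa using hg]
  refine sum_const_nat fun h hh => ?_
  rw [mem_filter] at hh
  rw [← AddMonoidHom.card_fiber_eq_of_mem_range f (hP h hh.2) ⟨0, map_zero f⟩]
  congr 1
  ext g
  simp only [mem_filter, mem_univ, true_and, and_iff_right_iff_imp]
  rintro rfl
  exact hh.2

theorem exists_pow_eq_of_orderOf_eq_card {G : Type*} [Group G] [Finite G] {g : G}
    (hg : orderOf g = Nat.card G) (x : G) : ∃ k : ℕ, g ^ k = x := by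
  have : Subgroup.zpowers g = ⊤ :=
    Subgroup.eq_top_of_card_eq _ (by rw [Nat.card_zpowers, hg])
  exact mem_powers_iff_mem_zpowers.mpr (this ▸ Subgroup.mem_top x)

theorem IsUnit.isSquare_mul_mul_self_iff {M : Type*} [CommMonoid M] {c : M} (hc : IsUnit c)
    (a : M) : IsSquare (a * (c * c)) ↔ IsSquare a := by
  obtain ⟨u, rfl⟩ := hc
  refine ⟨fun ⟨r, hr⟩ => ⟨r * ↑u⁻¹, ?_⟩, fun h => h.mul ⟨u, rfl⟩⟩
  rw [mul_mul_mul_comm, ← hr]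
  simp [mul_assoc]

theorem isSquare_pow_iff_even {K : Type*} [Field K] {a : K} (ha : ¬ IsSquare a) (n : ℕ) :
    IsSquare (a ^ n) ↔ Even n := by
  refine ⟨fun h => ?_, fun h => h.isSquare_pow a⟩
  by_contra hn
  obtain ⟨k, rfl⟩ := Nat.not_even_iff_odd.mp hn
  obtain ⟨r, hr⟩ := h
  have ha₀ : a ≠ 0 := by
    rintro rfl
    exact ha IsSquare.zero
  refine ha ⟨r / a ^ k, ?_⟩
  field_simp
  linear_combination hr

section Binet

variable {R : Type*} [CommRing R] {φ : R}

theorem mul_fib_eq_pow_sub_pow (hφ : φ ^ 2 = φ + 1) (n : ℕ) :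
    (2 * φ - 1) * Nat.fib n = φ ^ n - (1 - φ) ^ n := by
  induction n using Nat.twoStepInduction with
  | zero => simp
  | one => simp; ring
  | more n ih₁ ih₂ =>
    rw [Nat.fib_add_two, Nat.cast_add]
    linear_combination ih₁ + ih₂ + ((1 - φ) ^ n - φ ^ n) * hφ

theorem fib_eq_iff (hφ : φ ^ 2 = φ + 1) (hD : IsUnit (2 * φ - 1)) (n : ℕ) (m : R) :
    (Nat.fib n : R) = m ↔ (φ ^ n) ^ 2 - (2 * φ - 1) * m * φ ^ n - (-1) ^ n = 0 := by
  have hφu : IsUnit φ := IsUnit.of_mul_eq_one (φ - 1) (by linear_combination hφ)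
  have hψ : φ ^ n * (1 - φ) ^ n = (-1) ^ n := by
    rw [← mul_pow]
    congr 1
    linear_combination -hφ
  have key : (φ ^ n) ^ 2 - (2 * φ - 1) * m * φ ^ n - (-1) ^ n =
      φ ^ n * (2 * φ - 1) * (Nat.fib n - m) := by
    linear_combination (-φ ^ n) * mul_fib_eq_pow_sub_pow hφ n + hψ
  rw [key, ((hφu.pow n).mul hD).mul_right_eq_zero, sub_eq_zero]

end Binet

theorem Int.exists_pow_dvd_eval_of_dvd_eval {p : ℕ} (hp : p.Prime) (F : ℤ[X]) {a : ℤ}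
    (ha : (p : ℤ) ∣ F.eval a) (ha' : ¬ (p : ℤ) ∣ F.derivative.eval a) (n : ℕ) :
    ∃ b, (p : ℤ) ^ n ∣ F.eval b ∧ (p : ℤ) ∣ b - a := by
  suffices ∀ n, ∃ b, (p : ℤ) ^ (n + 1) ∣ F.eval b ∧ (p : ℤ) ∣ b - a by
    obtain ⟨b, hb, hba⟩ := this n
    exact ⟨b, (pow_dvd_pow _ n.le_succ).trans hb, hba⟩
  intro n
  induction n with
  | zero => exact ⟨a, by simpa using ha, by simp⟩
  | succ n ih =>
    obtain ⟨b, ⟨c, hc⟩, hba⟩ := ih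
    have hb' : ¬ (p : ℤ) ∣ F.derivative.eval b := fun h =>
      ha' (by simpa using dvd_sub h (hba.trans (sub_dvd_eval_sub b a F.derivative)))
    -- Newton's step `b ↦ b - F(b) / F'(b)`, with `v` an inverse of `F'(b)` modulo `p`
    obtain ⟨u, v, huv⟩ :=
      ((Nat.prime_iff_prime_int.mp hp).coprime_iff_not_dvd).mpr hb'
    obtain ⟨k, hk⟩ := F.binomExpansion b (-(F.eval b * v))
    refine ⟨b + -(F.eval b * v), ⟨c * u + k * p ^ n * c ^ 2 * v ^ 2, ?_⟩, ?_⟩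
    · rw [hk, hc]
      linear_combination (-(p : ℤ) ^ (n + 1) * c) * huv
    · rw [hc, add_sub_right_comm]
      exact dvd_add hba ⟨-(p ^ n * c * v), by ring⟩

namespace ZMod

abbrev reduce (p n : ℕ) : ZMod (p ^ (n + 1)) →+* ZMod p :=
  castHom (dvd_pow_self p n.succ_ne_zero) (ZMod p)

theorem castHom_eq_zero_iff {m n : ℕ} [NeZero n] (h : m ∣ n) (x : ZMod n) :
    castHom h (ZMod m) x = 0 ↔ ∃ y, x = m * y := by
  constructor
  · intro hx
    rw [castHom_apply, cast_eq_val, natCast_eq_zero_iff] at hx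
    obtain ⟨c, hc⟩ := hx
    exact ⟨c, by rw [← natCast_zmod_val x, hc, Nat.cast_mul]⟩
  · rintro ⟨y, rfl⟩
    rw [map_mul, map_natCast, natCast_self, zero_mul]

theorem card_filter_castHom {m n : ℕ} [NeZero m] [NeZero n] (h : m ∣ n) (P : ZMod m → Prop)
    [DecidablePred P] : #{x : ZMod n | P (castHom h (ZMod m) x)} * m = #{y | P y} * n := by
  have hsurj (y : ZMod m) (_ : True) : y ∈ Set.range (castHom h (ZMod m)) :=
    castHom_surjective h y
  have hker := AddMonoidHom.card_filter_comp (castHom h (ZMod m)) (fun _ => True) hsurj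
  simp only [filter_true, card_univ, ZMod.card] at hker
  rw [AddMonoidHom.card_filter_comp _ P (fun y _ => hsurj y trivial), mul_assoc, mul_comm _ m,
    ← hker]

theorem pow_mul_eq_zero_iff {p k j : ℕ} [NeZero p] (y : ZMod (p ^ (k + j))) :
    (p : ZMod (p ^ (k + j))) ^ j * y = 0 ↔
      castHom (pow_dvd_pow p (k.le_add_right j)) (ZMod (p ^ k)) y = 0 := by
  rw [← natCast_zmod_val y, map_natCast, ← Nat.cast_pow, ← Nat.cast_mul, natCast_eq_zero_iff,
    natCast_eq_zero_iff]
  generalize y.val = v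
  rw [pow_add, mul_comm (p ^ k), Nat.mul_dvd_mul_iff_left (pow_pos (NeZero.pos p) j)]

variable {p : ℕ} [hp : Fact p.Prime]

theorem isUnit_iff_reduce_ne_zero {n : ℕ} (x : ZMod (p ^ (n + 1))) :
    IsUnit x ↔ reduce p n x ≠ 0 := by
  rw [← natCast_zmod_val x, isUnit_iff_coprime, map_natCast, Ne, natCast_eq_zero_iff,
    Nat.coprime_pow_right_iff n.succ_pos, Nat.coprime_comm, hp.out.coprime_iff_not_dvd]

theorem isSquare_pow_two_mul_iff {k : ℕ} (y : ZMod (p ^ (k + 2))) :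
    IsSquare ((p : ZMod (p ^ (k + 2))) ^ 2 * y) ↔
      IsSquare (castHom (pow_dvd_pow p (k.le_add_right 2)) (ZMod (p ^ k)) y) := by
  constructor
  · rintro ⟨t, ht⟩
    have : reduce p (k + 1) t = 0 := by
      simpa using (congrArg (reduce p (k + 1)) ht).symm
    obtain ⟨t, rfl⟩ := (castHom_eq_zero_iff _ _).mp this
    refine ⟨castHom (pow_dvd_pow p (k.le_add_right 2)) (ZMod (p ^ k)) t, ?_⟩
    rw [← map_mul, ← sub_eq_zero, ← map_sub, ← pow_mul_eq_zero_iff]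
    linear_combination ht
  · rintro ⟨s, hs⟩
    obtain ⟨s, rfl⟩ := castHom_surjective (pow_dvd_pow p (k.le_add_right 2)) s
    rw [← map_mul, ← sub_eq_zero, ← map_sub, ← pow_mul_eq_zero_iff] at hs
    exact ⟨p * s, by linear_combination hs⟩

theorem isSquare_of_isSquare_reduce (hp2 : p ≠ 2) {n : ℕ} {a : ZMod (p ^ (n + 1))}
    (ha₀ : reduce p n a ≠ 0) (ha : IsSquare (reduce p n a)) : IsSquare a := by
  obtain ⟨a, rfl⟩ := intCast_surjective a
  obtain ⟨s, hs⟩ := ha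
  obtain ⟨s, rfl⟩ := intCast_surjective s
  rw [map_intCast] at ha₀ hs
  have hs₀ : (s : ZMod p) ≠ 0 := by
    rintro h
    rw [h, mul_zero] at hs
    exact ha₀ hs
  have h2 : (2 : ZMod p) ≠ 0 := Ring.two_ne_zero (by rwa [ringChar_zmod_n])
  obtain ⟨b, hb, -⟩ := Int.exists_pow_dvd_eval_of_dvd_eval hp.out (X ^ 2 - C a) (a := s)
    (by rw [← intCast_zmod_eq_zero_iff_dvd]; simp [hs, sq])
    (by rw [← intCast_zmod_eq_zero_iff_dvd]; simpa using mul_ne_zero h2 hs₀) (n + 1)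
  refine ⟨b, ?_⟩
  rw [← Nat.cast_pow, ← intCast_zmod_eq_zero_iff_dvd] at hb
  simp only [eval_sub, eval_pow, eval_X, eval_C, Int.cast_sub, Int.cast_pow] at hb
  linear_combination -hb

theorem card_reduce_eq_zero_and_isSquare (k : ℕ) :
    #{z : ZMod (p ^ (k + 2)) | reduce p (k + 1) z = 0 ∧ IsSquare z} =
      #{y : ZMod (p ^ k) | IsSquare y} := by
  -- Count the `y` with `p ^ 2 * y` a square twice: through `μ : y ↦ p ^ 2 * y`, whose image
  -- contains every square divisible by `p`, and through the reduction `ρ`; `ker μ = ker ρ`.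
  set ρ := castHom (pow_dvd_pow p (k.le_add_right 2)) (ZMod (p ^ k))
  set μ := AddMonoidHom.mulLeft ((p : ZMod (p ^ (k + 2))) ^ 2)
  have hμ := AddMonoidHom.card_filter_comp μ (fun z => reduce p (k + 1) z = 0 ∧ IsSquare z) ?_
  · have hρ := AddMonoidHom.card_filter_comp ρ IsSquare (fun y _ => castHom_surjective _ y)
    have hker : #{y | μ y = 0} = #{y | ρ y = 0} := by
      simp only [μ, ρ, AddMonoidHom.coe_mulLeft, pow_mul_eq_zero_iff]
    have hsq : #{y | reduce p (k + 1) (μ y) = 0 ∧ IsSquare (μ y)} = #{y | IsSquare (ρ y)} := by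
      refine congrArg Finset.card (filter_congr fun y _ => ?_)
      rw [← isSquare_pow_two_mul_iff, and_iff_right (by simp [μ])]
      rfl
    have hpos : 0 < #{y | ρ y = 0} := card_pos.mpr ⟨0, by simp⟩
    refine Nat.eq_of_mul_eq_mul_right hpos ?_
    rw [← hker, ← hμ, hsq, hρ, hker]
  · rintro z ⟨h0, t, rfl⟩
    have : reduce p (k + 1) t = 0 := by simpa using h0
    obtain ⟨t, rfl⟩ := (castHom_eq_zero_iff _ _).mp this
    exact ⟨t * t, by simp [μ]; ring⟩

theorem card_isSquare_eq (hp2 : p ≠ 2) (n : ℕ) :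
    #{y : ZMod (p ^ (n + 1)) | IsSquare y} =
      #{z : ZMod (p ^ (n + 1)) | reduce p n z = 0 ∧ IsSquare z} +
        #{c : ZMod p | c ≠ 0 ∧ IsSquare c} * p ^ n := by
  rw [← card_filter_add_card_filter_not (fun y => reduce p n y = 0), filter_filter,
    filter_filter]
  congr 1
  · simp_rw [and_comm]
  · refine Nat.eq_of_mul_eq_mul_right hp.out.pos ?_
    rw [mul_assoc, ← pow_succ,
      ← card_filter_castHom (dvd_pow_self p n.succ_ne_zero) (fun c => c ≠ 0 ∧ IsSquare c)]
    refine congrArg (#· * p) (filter_congr fun y _ => ?_)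
    exact ⟨fun h => ⟨h.2, h.1.map _⟩, fun h => ⟨isSquare_of_isSquare_reduce hp2 h.1 h.2, h.1⟩⟩

end ZMod

instance fact_prime_eleven : Fact (Nat.Prime 11) := ⟨by norm_num⟩

theorem Int.exists_pow_ten_eq_one_add_eleven_mul {f : ℤ} (hf : (121 : ℤ) ∣ f ^ 2 - f - 1)
    (h8 : (f : ZMod 11) = 8) : ∃ a : ℤ, f ^ 10 = 1 + 11 * a ∧ ¬ (11 : ℤ) ∣ a := by
  -- `85` is the root of `x ^ 2 = x + 1` modulo `121` above `8`, and `85 ^ 10 ≡ 111`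
  have hf85 : (f : ZMod 121) = 85 := by
    have key : ∀ x : ZMod 121, x * x = x + 1 →
        ZMod.castHom (by norm_num : 11 ∣ 121) (ZMod 11) x = 8 → x = 85 := by
      set_option maxRecDepth 10000 in decide
    refine key _ ?_ ?_
    · have := (ZMod.intCast_zmod_eq_zero_iff_dvd _ 121).mpr hf
      push_cast at this
      linear_combination this
    · rwa [map_intCast]
  obtain ⟨c, hc⟩ := (ZMod.intCast_zmod_eq_zero_iff_dvd (f ^ 10 - 111) 121).mp (by
    push_cast
    rw [hf85]
    decide)
  exact ⟨10 + 11 * c, by linear_combination hc, by omega⟩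

namespace ZMod

theorem orderOf_intCast_eq {f : ℤ} (hf : (121 : ℤ) ∣ f ^ 2 - f - 1) (h8 : (f : ZMod 11) = 8)
    (n : ℕ) : orderOf (f : ZMod (11 ^ (n + 1))) = 10 * 11 ^ n := by
  obtain ⟨a, ha, ha11⟩ := Int.exists_pow_ten_eq_one_add_eleven_mul hf h8
  have hπf : reduce 11 n f = 8 := by rw [map_intCast, h8]
  have hpow : orderOf ((f : ZMod (11 ^ (n + 1))) ^ 10) = 11 ^ n := by
    rw [← Int.cast_pow, ha]
    have := orderOf_one_add_mul_prime (p := 11) (by norm_num) (by norm_num) a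
      (by exact_mod_cast ha11) n
    push_cast
    rwa [Nat.cast_ofNat] at this
  have hred : orderOf (reduce 11 n f) = 10 := by
    rw [hπf, orderOf_eq_iff (by norm_num)]
    decide
  have hu : IsUnit (f : ZMod (11 ^ (n + 1))) :=
    (isUnit_iff_reduce_ne_zero _).mpr (by rw [hπf]; decide)
  apply Nat.dvd_antisymm
  · rw [← hu.unit_spec, orderOf_units]
    convert orderOf_dvd_card
    rw [card_units_eq_totient, Nat.totient_prime_pow_succ (by norm_num)]
    ring
  · refine Nat.Coprime.mul_dvd_of_dvd_of_dvd (Nat.Coprime.pow_right n (by norm_num)) ?_ ?_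
    · exact hred ▸ orderOf_map_dvd (reduce 11 n).toMonoidHom _
    · exact hpow ▸ orderOf_pow_dvd 10

theorem exists_goldenRatio_generator (n : ℕ) :
    ∃ φ : ZMod (11 ^ (n + 1)), φ ^ 2 = φ + 1 ∧ reduce 11 n φ = 8 ∧
      ∀ x, IsUnit x → ∃ k, φ ^ k = x := by
  obtain ⟨f, hf, h8⟩ := Int.exists_pow_dvd_eval_of_dvd_eval (p := 11) (by norm_num)
    (X ^ 2 - X - 1) (a := 8) (by norm_num) (by norm_num) (n + 2)
  simp only [eval_sub, eval_pow, eval_X, eval_one] at hf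
  have hf' : ((f ^ 2 - f - 1 : ℤ) : ZMod (11 ^ (n + 1))) = 0 := by
    rw [intCast_zmod_eq_zero_iff_dvd]
    exact_mod_cast (pow_dvd_pow 11 (by omega)).trans hf
  replace h8 : (f : ZMod 11) = 8 := by
    have := (intCast_eq_intCast_iff_dvd_sub 8 f 11).mpr h8
    push_cast at this
    exact this.symm
  have hord := orderOf_intCast_eq ((pow_dvd_pow 11 (by omega : 2 ≤ n + 2)).trans hf) h8 n
  have hπf : reduce 11 n f = 8 := by rw [map_intCast, h8]
  have hu : IsUnit (f : ZMod (11 ^ (n + 1))) :=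
    (isUnit_iff_reduce_ne_zero _).mpr (by rw [hπf]; decide)
  refine ⟨f, by push_cast at hf'; linear_combination hf', hπf, fun x hx => ?_⟩
  obtain ⟨k, hk⟩ := exists_pow_eq_of_orderOf_eq_card (g := hu.unit) (by
    rw [← orderOf_units, hu.unit_spec, hord, Nat.card_eq_fintype_card, card_units_eq_totient,
      Nat.totient_prime_pow_succ (by norm_num)]
    ring) hx.unit
  exact ⟨k, by simpa using congrArg Units.val hk⟩

theorem exists_mul_two_eq_one (n : ℕ) : ∃ i : ZMod (11 ^ (n + 1)), 2 * i = 1 :=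
  ((isUnit_iff_reduce_ne_zero 2).mpr (by rw [map_ofNat]; decide)).exists_right_inv

section Roots

variable {n : ℕ} {D : ZMod (11 ^ (n + 1))} (hD : D ^ 2 = 5) (hπD : reduce 11 n D = 4)
include hD hπD

theorem exists_isSquare_root_iff (m : ZMod (11 ^ (n + 1))) :
    (∃ x, IsSquare x ∧ x ^ 2 - D * m * x - 1 = 0) ↔
      reduce 11 n m ∈ ({0, 1, 3, 8, 10} : Finset (ZMod 11)) := by
  constructor
  · rintro ⟨x, -, hx⟩
    have h := congrArg (reduce 11 n)
      (show (2 * x - D * m) ^ 2 = 5 * m ^ 2 + 4 by linear_combination 4 * hx + m ^ 2 * hD)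
    simp only [map_pow, map_sub, map_mul, map_add, map_ofNat, hπD] at h
    have key : ∀ c y : ZMod 11, (2 * y - 4 * c) ^ 2 = 5 * c ^ 2 + 4 →
        c ∈ ({0, 1, 3, 8, 10} : Finset (ZMod 11)) := by decide
    exact key _ _ h
  · intro hm
    obtain ⟨s, hs⟩ : IsSquare (5 * m ^ 2 + 4) := by
      have key : ∀ c ∈ ({0, 1, 3, 8, 10} : Finset (ZMod 11)),
          5 * c ^ 2 + 4 ≠ 0 ∧ IsSquare (5 * c ^ 2 + 4) := by decide
      have e : reduce 11 n (5 * m ^ 2 + 4) = 5 * reduce 11 n m ^ 2 + 4 := by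
        simp only [map_add, map_mul, map_pow, map_ofNat]
      exact isSquare_of_isSquare_reduce (by norm_num) (e ▸ (key _ hm).1) (e ▸ (key _ hm).2)
    obtain ⟨i, hi⟩ := exists_mul_two_eq_one n
    have hroot (t) (ht : 5 * m ^ 2 + 4 = t * t) :
        (i * (D * m + t)) ^ 2 - D * m * (i * (D * m + t)) - 1 = 0 := by
      linear_combination (2 * i + 1 + i * D * m * t + i * D ^ 2 * m ^ 2) * hi -
        i ^ 2 * m ^ 2 * hD - i ^ 2 * ht
    -- the two roots have product `-1`, a non-square modulo `11`, so one of them is a square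
    have hprod : reduce 11 n (i * (D * m + s)) * reduce 11 n (i * (D * m + -s)) = -1 := by
      rw [← map_mul, show i * (D * m + s) * (i * (D * m + -s)) = -1 by
        linear_combination i ^ 2 * m ^ 2 * hD + i ^ 2 * hs - (2 * i + 1) * hi, map_neg, map_one]
    have key : ∀ a b : ZMod 11, a * b = -1 → (a ≠ 0 ∧ IsSquare a) ∨ (b ≠ 0 ∧ IsSquare b) := by
      decide
    rcases key _ _ hprod with ⟨h0, hsq⟩ | ⟨h0, hsq⟩
    · exact ⟨_, isSquare_of_isSquare_reduce (by norm_num) h0 hsq, hroot s hs⟩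
    · exact ⟨_, isSquare_of_isSquare_reduce (by norm_num) h0 hsq,
        hroot (-s) (by rw [neg_mul_neg]; exact hs)⟩

theorem exists_not_isSquare_root_iff (m : ZMod (11 ^ (n + 1))) :
    (∃ x, ¬ IsSquare x ∧ x ^ 2 - D * m * x + 1 = 0) ↔
      reduce 11 n m ∈ ({1, 2} : Finset (ZMod 11)) ∨
        (reduce 11 n m = 5 ∧ IsSquare (5 * m ^ 2 - 4)) := by
  have key : ∀ c y : ZMod 11, y ^ 2 - 4 * c * y + 1 = 0 →
      (¬ IsSquare y ↔ c ∈ ({1, 2, 5} : Finset (ZMod 11))) := by decide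
  have hπroot (x : ZMod (11 ^ (n + 1))) (hx : x ^ 2 - D * m * x + 1 = 0) :
      reduce 11 n x ^ 2 - 4 * reduce 11 n m * reduce 11 n x + 1 = 0 := by
    simpa only [map_add, map_sub, map_mul, map_pow, map_one, map_zero, hπD]
      using congrArg (reduce 11 n) hx
  constructor
  · rintro ⟨x, hx, hroot⟩
    have hπx : reduce 11 n x ≠ 0 := (isUnit_iff_reduce_ne_zero x).mp
      (IsUnit.of_mul_eq_one (D * m - x) (by linear_combination -hroot))
    have hm := (key _ _ (hπroot x hroot)).mp
      fun h => hx (isSquare_of_isSquare_reduce (by norm_num) hπx h)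
    simp only [Finset.mem_insert, Finset.mem_singleton] at hm ⊢
    rcases hm with hm | hm | hm
    · exact Or.inl (Or.inl hm)
    · exact Or.inl (Or.inr hm)
    · exact Or.inr ⟨hm, 2 * x - D * m, by linear_combination -4 * hroot - m ^ 2 * hD⟩
  · intro hm
    obtain ⟨s, hs⟩ : IsSquare (5 * m ^ 2 - 4) := by
      refine hm.elim (fun hm => ?_) And.right
      have key : ∀ c ∈ ({1, 2} : Finset (ZMod 11)),
          5 * c ^ 2 - 4 ≠ 0 ∧ IsSquare (5 * c ^ 2 - 4) := by decide
      have e : reduce 11 n (5 * m ^ 2 - 4) = 5 * reduce 11 n m ^ 2 - 4 := by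
        simp only [map_sub, map_mul, map_pow, map_ofNat]
      exact isSquare_of_isSquare_reduce (by norm_num) (e ▸ (key _ hm).1) (e ▸ (key _ hm).2)
    obtain ⟨i, hi⟩ := exists_mul_two_eq_one n
    have hroot : (i * (D * m + s)) ^ 2 - D * m * (i * (D * m + s)) + 1 = 0 := by
      linear_combination (i * D * m * s + i * D ^ 2 * m ^ 2 - 2 * i - 1) * hi -
        i ^ 2 * hs - i ^ 2 * m ^ 2 * hD
    refine ⟨_, fun hsq => ?_, hroot⟩
    refine (key _ _ (hπroot _ hroot)).mpr ?_ (hsq.map _)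
    simp only [Finset.mem_insert, Finset.mem_singleton] at hm ⊢
    tauto

end Roots

section Fibonacci

variable {n : ℕ} {φ : ZMod (11 ^ (n + 1))} (hφ : φ ^ 2 = φ + 1) (hπφ : reduce 11 n φ = 8)
  (hgen : ∀ x, IsUnit x → ∃ k, φ ^ k = x)
include hφ hπφ hgen

theorem exists_fib_eq_iff_exists_root (m : ZMod (11 ^ (n + 1))) :
    (∃ k, (Nat.fib k : ZMod (11 ^ (n + 1))) = m) ↔
      (∃ x, IsSquare x ∧ x ^ 2 - (2 * φ - 1) * m * x - 1 = 0) ∨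
        (∃ x, ¬ IsSquare x ∧ x ^ 2 - (2 * φ - 1) * m * x + 1 = 0) := by
  have hD : IsUnit (2 * φ - 1) := (isUnit_iff_reduce_ne_zero _).mpr (by
    rw [map_sub, map_mul, map_ofNat, map_one, hπφ]; decide)
  have hsq (k : ℕ) : IsSquare (φ ^ k) ↔ Even k := by
    refine ⟨fun h => ?_, fun h => h.isSquare_pow φ⟩
    have h := h.map (reduce 11 n)
    rw [map_pow, hπφ] at h
    exact (isSquare_pow_iff_even (by decide) k).mp h
  constructor
  · rintro ⟨k, hk⟩
    rw [fib_eq_iff hφ hD] at hk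
    rcases Nat.even_or_odd k with he | ho
    · exact Or.inl ⟨φ ^ k, (hsq k).mpr he, by rwa [he.neg_one_pow] at hk⟩
    · refine Or.inr ⟨φ ^ k, by rw [hsq]; exact Nat.not_even_iff_odd.mpr ho, ?_⟩
      rw [ho.neg_one_pow] at hk
      linear_combination hk
  · rintro (⟨x, hx, hroot⟩ | ⟨x, hx, hroot⟩)
    · obtain ⟨k, rfl⟩ := hgen x
        (IsUnit.of_mul_eq_one (x - (2 * φ - 1) * m) (by linear_combination hroot))
      refine ⟨k, (fib_eq_iff hφ hD k m).mpr ?_⟩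
      rwa [((hsq k).mp hx).neg_one_pow]
    · obtain ⟨k, rfl⟩ := hgen x
        (IsUnit.of_mul_eq_one ((2 * φ - 1) * m - x) (by linear_combination -hroot))
      have hk : Odd k := Nat.not_even_iff_odd.mp fun h => hx ((hsq k).mpr h)
      refine ⟨k, (fib_eq_iff hφ hD k m).mpr ?_⟩
      rw [hk.neg_one_pow]
      linear_combination hroot

theorem exists_fib_eq_iff (m : ZMod (11 ^ (n + 1))) :
    (∃ k, (Nat.fib k : ZMod (11 ^ (n + 1))) = m) ↔
      reduce 11 n m ∈ ({0, 1, 2, 3, 8, 10} : Finset (ZMod 11)) ∨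
        (reduce 11 n m = 5 ∧ IsSquare (5 * m ^ 2 - 4)) := by
  have hD : (2 * φ - 1) ^ 2 = 5 := by linear_combination 4 * hφ
  have hπD : reduce 11 n (2 * φ - 1) = 4 := by
    rw [map_sub, map_mul, map_ofNat, map_one, hπφ]; decide
  rw [exists_fib_eq_iff_exists_root hφ hπφ hgen, exists_isSquare_root_iff hD hπD,
    exists_not_isSquare_root_iff hD hπD]
  simp only [Finset.mem_insert, Finset.mem_singleton]
  tauto

end Fibonacci

theorem card_reduce_eleven_eq_zero_and_isSquare (n : ℕ) :
    24 * #{z : ZMod (11 ^ (n + 1)) | reduce 11 n z = 0 ∧ IsSquare z} + 11 ^ (n % 2) =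
      11 ^ n + 24 := by
  induction n using Nat.twoStepInduction with
  | zero => decide
  | one => rw [card_reduce_eq_zero_and_isSquare 0]; decide
  | more n ih _ =>
    rw [card_reduce_eq_zero_and_isSquare (n + 1), card_isSquare_eq (by norm_num) n,
      (by decide : #{c : ZMod 11 | c ≠ 0 ∧ IsSquare c} = 5), Nat.add_mod_right]
    have : 11 ^ (n + 2) = 121 * 11 ^ n := by ring
    linarith

theorem card_reduce_eq_five_and_isSquare {n : ℕ} {D : ZMod (11 ^ (n + 1))} (hD : D ^ 2 = 5)
    (hπD : reduce 11 n D = 4) :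
    #{m : ZMod (11 ^ (n + 1)) | reduce 11 n m = 5 ∧ IsSquare (5 * m ^ 2 - 4)} =
      #{z : ZMod (11 ^ (n + 1)) | reduce 11 n z = 0 ∧ IsSquare z} := by
  obtain ⟨E, hE⟩ := ((isUnit_iff_reduce_ne_zero D).mpr (by rw [hπD]; decide)).exists_right_inv
  have hπ (m : ZMod (11 ^ (n + 1))) : reduce 11 n (-D * m - 2) = 0 ↔ reduce 11 n m = 5 := by
    have key : ∀ c : ZMod 11, -4 * c - 2 = 0 ↔ c = 5 := by decide
    rw [map_sub, map_mul, map_neg, map_ofNat, hπD]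
    exact key _
  -- `5 m ^ 2 - 4 = z (z + 4)` for `z = -D m - 2`, and `z + 4 ≡ 4` is a unit square
  have hsq (m : ZMod (11 ^ (n + 1))) (hm : reduce 11 n m = 5) :
      IsSquare (5 * m ^ 2 - 4) ↔ IsSquare (-D * m - 2) := by
    have hπ4 : reduce 11 n (-D * m - 2 + 4) = 4 := by
      rw [map_add, (hπ m).mpr hm, map_ofNat, zero_add]
    obtain ⟨c, hc⟩ := isSquare_of_isSquare_reduce (a := -D * m - 2 + 4) (by norm_num)
      (by rw [hπ4]; decide) (by rw [hπ4]; decide)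
    have hcu : IsUnit c := (isUnit_iff_reduce_ne_zero c).mpr fun h => by
      have := congrArg (reduce 11 n) hc
      rw [hπ4, map_mul, h, mul_zero] at this
      exact absurd this (by decide)
    calc IsSquare (5 * m ^ 2 - 4) ↔ IsSquare ((-D * m - 2) * (c * c)) := by
          rw [← hc]
          exact iff_of_eq (congrArg IsSquare (by linear_combination -m ^ 2 * hD))
      _ ↔ IsSquare (-D * m - 2) := hcu.isSquare_mul_mul_self_iff _
  refine card_nbij' (fun m => -D * m - 2) (fun z => -E * (z + 2)) ?_ ?_ ?_ ?_
  · intro m hm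
    simp only [coe_filter, Set.mem_ofPred_eq, mem_univ, true_and] at hm ⊢
    exact ⟨(hπ m).mpr hm.1, (hsq m hm.1).mp hm.2⟩
  · intro z hz
    simp only [coe_filter, Set.mem_ofPred_eq, mem_univ, true_and] at hz ⊢
    have hz' : -D * (-E * (z + 2)) - 2 = z := by linear_combination (z + 2) * hE
    rw [← hz'] at hz
    have hm := (hπ _).mp hz.1
    exact ⟨hm, (hsq _ hm).mpr hz.2⟩
  · intro m _
    linear_combination m * hE
  · intro z _
    linear_combination (z + 2) * hE

theorem card_fib_residues (n : ℕ) :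
    24 * Nat.card {m : ZMod (11 ^ (n + 1)) // ∃ k, (Nat.fib k : ZMod (11 ^ (n + 1))) = m} +
      11 ^ (n % 2) = 145 * 11 ^ n + 24 := by
  classical
  obtain ⟨φ, hφ, hπφ, hgen⟩ := exists_goldenRatio_generator n
  have h6 : #{m : ZMod (11 ^ (n + 1)) |
      reduce 11 n m ∈ ({0, 1, 2, 3, 8, 10} : Finset (ZMod 11))} = 6 * 11 ^ n := by
    refine Nat.eq_of_mul_eq_mul_right (by norm_num : 0 < 11) ?_
    rw [card_filter_castHom (dvd_pow_self 11 n.succ_ne_zero)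
      (· ∈ ({0, 1, 2, 3, 8, 10} : Finset (ZMod 11))),
      (by decide : #{c : ZMod 11 | c ∈ ({0, 1, 2, 3, 8, 10} : Finset (ZMod 11))} = 6),
      Nat.succ_eq_add_one]
    ring
  have h5 := card_reduce_eq_five_and_isSquare (by linear_combination 4 * hφ : (2 * φ - 1) ^ 2 = 5)
    (by rw [map_sub, map_mul, map_ofNat, map_one, hπφ]; decide)
  rw [Nat.card_eq_fintype_card, Fintype.card_subtype,
    filter_congr fun m _ => exists_fib_eq_iff hφ hπφ hgen m, filter_or,
    card_union_of_disjoint (disjoint_filter.mpr fun m _ h₁ h₂ => by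
      rw [h₂.1] at h₁; exact absurd h₁ (by decide)), h6, h5]
  have := card_reduce_eleven_eq_zero_and_isSquare n
  linarith

theorem card_fib_residues_div (n : ℕ) :
    (Nat.card {m : ZMod (11 ^ (n + 1)) // ∃ k, (Nat.fib k : ZMod (11 ^ (n + 1))) = m} : ℝ) /
        11 ^ (n + 1) = 145 / 264 + (24 - 11 ^ (n % 2)) / 24 * (1 / 11) ^ (n + 1) := by
  have h : (24 * Nat.card {m : ZMod (11 ^ (n + 1)) // ∃ k, (Nat.fib k : ZMod _) = m} : ℝ) +
      11 ^ (n % 2) = 145 * 11 ^ n + 24 := by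
    exact_mod_cast card_fib_residues n
  rw [one_div_pow]
  field_simp
  linear_combination 264 * h

end ZMod

open Filter Topology

/-- The limiting density of residues attained by the Fibonacci sequence modulo `11^α`
is `145/264`. -/
theorem stmt_19 :
    Tendsto (fun α : ℕ =>
        (Nat.card {m : ZMod (11 ^ α) // ∃ n : ℕ, ((Nat.fib n : ℕ) : ZMod (11 ^ α)) = m} : ℝ)
          / (11 ^ α : ℝ))
      atTop (𝓝 (145 / 264)) := by
  rw [← tendsto_add_atTop_iff_nat 1, tendsto_congr ZMod.card_fib_residues_div]
  have hgeom : Tendsto (fun n : ℕ => (1 / 11 : ℝ) ^ (n + 1)) atTop (𝓝 0) :=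
    (tendsto_pow_atTop_nhds_zero_of_lt_one (by norm_num) (by norm_num)).comp
      (tendsto_add_atTop_nat 1)
  have hcoeff (n : ℕ) : 0 ≤ (24 - 11 ^ (n % 2) : ℝ) / 24 ∧ (24 - 11 ^ (n % 2) : ℝ) / 24 ≤ 1 := by
    rcases Nat.mod_two_eq_zero_or_one n with h | h <;> rw [h] <;> norm_num
  have herr : Tendsto (fun n : ℕ => (24 - 11 ^ (n % 2) : ℝ) / 24 * (1 / 11) ^ (n + 1))
      atTop (𝓝 0) :=
    squeeze_zero (fun n => mul_nonneg (hcoeff n).1 (by positivity))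
      (fun n => mul_le_of_le_one_left (by positivity) (hcoeff n).2) hgeom
  simpa using tendsto_const_nhds.add herr
end
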